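/- arXiv:1805.03685 — 8 statements merged into one kernel-verified Lean document; each statement's English description precedes it below -/
import Mathlib

section
/- Let q, N ∈ ℤ with q, N > 0, let ε = 1/(4N²), and let Δ = {(x,y) ∈ ℝ² : x ≥ ε, y ≥ ε, q·N·(1−x) ≥ y}. Then for every integer t with 0 ≤ t < N, the number of integer points in the translate Δ + (t/N, 0) equals q·t. -/
/-- The triangle `Δ = {x,y ≥ ε, qN(1-x) ≥ y}` translated by `(t/N, 0)`
contains exactly `q·t` integer points, for `0 ≤ t < N`. -/
theorem stmt_5 (q N t : ℤ) (hq : 0 < q) (hN : 0 < N) (ht0 : 0 ≤ t) (htN : t < N) :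
    ({p : ℤ × ℤ |
        (1 : ℝ) / (4 * (N : ℝ) ^ 2) ≤ (p.1 : ℝ) - (t : ℝ) / (N : ℝ) ∧
        (1 : ℝ) / (4 * (N : ℝ) ^ 2) ≤ (p.2 : ℝ) ∧
        (p.2 : ℝ) ≤ (q : ℝ) * (N : ℝ) * (1 - ((p.1 : ℝ) - (t : ℝ) / (N : ℝ)))}.ncard : ℤ)
      = q * t := by
  have hN0 : (0:ℝ) < (N:ℝ) := by exact_mod_cast hN
  have hq0 : (0:ℝ) < (q:ℝ) := by exact_mod_cast hq
  have htR : (t:ℝ) < (N:ℝ) := by exact_mod_cast htN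
  have ht0R : (0:ℝ) ≤ (t:ℝ) := by exact_mod_cast ht0
  have hN1 : (1:ℝ) ≤ (N:ℝ) := by exact_mod_cast hN
  have hset : {p : ℤ × ℤ |
        (1 : ℝ) / (4 * (N : ℝ) ^ 2) ≤ (p.1 : ℝ) - (t : ℝ) / (N : ℝ) ∧
        (1 : ℝ) / (4 * (N : ℝ) ^ 2) ≤ (p.2 : ℝ) ∧
        (p.2 : ℝ) ≤ (q : ℝ) * (N : ℝ) * (1 - ((p.1 : ℝ) - (t : ℝ) / (N : ℝ)))}
      = (fun b => ((1:ℤ), b)) '' (Set.Icc 1 (q*t)) := by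
    ext ⟨a, b⟩
    simp only [Set.mem_setOf_eq, Set.mem_image, Set.mem_Icc, Prod.mk.injEq]
    constructor
    · rintro ⟨h1, h2, h3⟩
      have hb1 : 1 ≤ b := by
        have : (0:ℝ) < (b:ℝ) := lt_of_lt_of_le (by positivity) h2
        exact_mod_cast this
      have hbR : (1:ℝ) ≤ (b:ℝ) := by exact_mod_cast hb1
      have ha1 : 1 ≤ a := by
        have : (0:ℝ) < (a:ℝ) := by
          have : (0:ℝ) < (t:ℝ)/(N:ℝ) + 1 / (4 * (N : ℝ) ^ 2) := by positivity
          linarith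
        exact_mod_cast this
      have ha2 : a ≤ 1 := by
        by_contra h
        push_neg at h
        have haR : (2:ℝ) ≤ (a:ℝ) := by exact_mod_cast h
        have htN' : (t:ℝ)/(N:ℝ) < 1 := by
          rw [div_lt_one hN0]; exact htR
        have : (q:ℝ) * (N:ℝ) * (1 - ((a:ℝ) - (t:ℝ)/(N:ℝ))) < 0 := by
          have h4 : 1 - ((a:ℝ) - (t:ℝ)/(N:ℝ)) < 0 := by linarith
          have := mul_pos hq0 hN0
          nlinarith
        linarith
      have ha : a = 1 := le_antisymm ha2 ha1
      refine ⟨b, ⟨hb1, ?_⟩, ha.symm, rfl⟩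
      subst ha
      have : (q:ℝ) * (N:ℝ) * (1 - ((1:ℝ) - (t:ℝ)/(N:ℝ))) = (q:ℝ) * (t:ℝ) := by
        field_simp; ring
      rw [Int.cast_one] at h3
      rw [this] at h3
      exact_mod_cast h3
    · rintro ⟨c, ⟨hc1, hc2⟩, ha, hb⟩
      subst ha; subst hb
      have hcR : (1:ℝ) ≤ (c:ℝ) := by exact_mod_cast hc1
      have hcR2 : (c:ℝ) ≤ (q:ℝ) * (t:ℝ) := by exact_mod_cast hc2
      have htN' : (t:ℝ) ≤ (N:ℝ) - 1 := by
        have : t ≤ N - 1 := by omega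
        exact_mod_cast this
      refine ⟨?_, ?_, ?_⟩
      · rw [Int.cast_one]
        have key : (t:ℝ)/(N:ℝ) + 1 / (4 * (N : ℝ) ^ 2) ≤ 1 := by
          have h1 : (t:ℝ)/(N:ℝ) ≤ 1 - 1/(N:ℝ) := by
            rw [div_le_iff₀ hN0]
            have hE : (1 - 1/(N:ℝ))*(N:ℝ) = (N:ℝ) - 1 := by field_simp
            linarith
          have h2 : 1 / (4 * (N : ℝ) ^ 2) ≤ 1/(N:ℝ) := by
            apply div_le_div_of_nonneg_left (by norm_num) hN0
            nlinarith
          linarith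
        linarith
      · have : 1 / (4 * (N : ℝ) ^ 2) ≤ 1 := by
          rw [div_le_one (by positivity)]; nlinarith
        linarith
      · rw [Int.cast_one]
        have : (q:ℝ) * (N:ℝ) * (1 - ((1:ℝ) - (t:ℝ)/(N:ℝ))) = (q:ℝ) * (t:ℝ) := by
          field_simp; ring
        rw [this]
        exact hcR2
  rw [hset]
  rw [Set.ncard_image_of_injective _ (fun x y h => (Prod.mk.injEq _ _ _ _ ▸ h).2)]
  rw [← Finset.coe_Icc, Set.ncard_coe_finset, Int.card_Icc]
  have : 0 ≤ q * t := mul_nonneg hq.le ht0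
  omega
end

section
/- Let p, q, N ∈ ℤ with p, q, N > 0, let ε = 1/(4N²), and let F_A = {(x,y) ∈ ℝ² : ε ≤ x ≤ 1, 1/2 − p ≤ y ≤ q·N·(1−x)}. Then for every integer t with 0 ≤ t < N, the number of integer points in F_A + (t/N, 0) equals p + q·t. -/
/-- The trapezoid `F_A = {ε ≤ x ≤ 1, 1/2 - p ≤ y ≤ qN(1-x)}` translated by
`(t/N, 0)` contains exactly `p + q·t` integer points, for `0 ≤ t < N`. -/
theorem stmt_6 (p q N t : ℤ) (hp : 0 < p) (hq : 0 < q) (hN : 0 < N)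
    (ht0 : 0 ≤ t) (htN : t < N) :
    ({z : ℤ × ℤ |
        (1 : ℝ) / (4 * (N : ℝ) ^ 2) ≤ (z.1 : ℝ) - (t : ℝ) / (N : ℝ) ∧
        (z.1 : ℝ) - (t : ℝ) / (N : ℝ) ≤ 1 ∧
        (1 : ℝ) / 2 - (p : ℝ) ≤ (z.2 : ℝ) ∧
        (z.2 : ℝ) ≤ (q : ℝ) * (N : ℝ) * (1 - ((z.1 : ℝ) - (t : ℝ) / (N : ℝ)))}.ncard : ℤ)
      = p + q * t := by
  have hNR : (0:ℝ) < (N:ℝ) := by exact_mod_cast hN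
  have hNne : (N:ℝ) ≠ 0 := ne_of_gt hNR
  have ht0R : (0:ℝ) ≤ (t:ℝ) := by exact_mod_cast ht0
  have htNR : (t:ℝ) ≤ (N:ℝ) - 1 := by
    have : t ≤ N - 1 := by omega
    exact_mod_cast this
  have htdiv0 : (0:ℝ) ≤ (t:ℝ) / (N:ℝ) := div_nonneg ht0R hNR.le
  have htdiv1 : (t:ℝ) / (N:ℝ) ≤ 1 - 1 / (N:ℝ) := by
    have h : (1:ℝ) - 1 / (N:ℝ) = ((N:ℝ) - 1) / (N:ℝ) := by field_simp
    rw [h]; gcongr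
  have heps : (1:ℝ) / (4 * (N:ℝ) ^ 2) ≤ 1 / (N:ℝ) := by
    apply div_le_div_of_nonneg_left one_pos.le hNR
    nlinarith
  have hset : {z : ℤ × ℤ |
        (1 : ℝ) / (4 * (N : ℝ) ^ 2) ≤ (z.1 : ℝ) - (t : ℝ) / (N : ℝ) ∧
        (z.1 : ℝ) - (t : ℝ) / (N : ℝ) ≤ 1 ∧
        (1 : ℝ) / 2 - (p : ℝ) ≤ (z.2 : ℝ) ∧
        (z.2 : ℝ) ≤ (q : ℝ) * (N : ℝ) * (1 - ((z.1 : ℝ) - (t : ℝ) / (N : ℝ)))}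
      = ↑(({1} : Finset ℤ) ×ˢ Finset.Icc (1 - p) (q * t)) := by
    ext ⟨x, y⟩
    simp only [Set.mem_setOf_eq, Finset.coe_product, Finset.coe_singleton, Finset.coe_Icc,
      Set.mem_prod, Set.mem_singleton_iff, Set.mem_Icc]
    constructor
    · rintro ⟨h1, h2, h3, h4⟩
      have hepos : (0:ℝ) < 1 / (4 * (N:ℝ) ^ 2) := by positivity
      have hx1 : (0:ℝ) < (x:ℝ) := by linarith
      have hx1' : 1 ≤ x := by
        have : (0:ℤ) < x := by exact_mod_cast hx1
        omega
      have hx2 : (x:ℝ) < 2 := by linarith [htdiv1, one_div_pos.mpr hNR]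
      have hx2' : x ≤ 1 := by
        have : x < 2 := by exact_mod_cast hx2
        omega
      have hx : x = 1 := le_antisymm hx2' hx1'
      subst hx
      refine ⟨rfl, ?_, ?_⟩
      · have : (-(p:ℝ)) < (y:ℝ) := by linarith
        have : -p < y := by exact_mod_cast this
        omega
      · have heq : (q:ℝ) * (N:ℝ) * (1 - (((1:ℤ):ℝ) - (t:ℝ)/(N:ℝ))) = (q:ℝ) * (t:ℝ) := by
          push_cast; field_simp; ring
        have : (y:ℝ) ≤ (q:ℝ) * (t:ℝ) := by rw [← heq]; exact h4
        exact_mod_cast this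
    · rintro ⟨hx, hy1, hy2⟩
      subst hx
      have hy1R : (1:ℝ) - (p:ℝ) ≤ (y:ℝ) := by exact_mod_cast hy1
      have hy2R : (y:ℝ) ≤ (q:ℝ) * (t:ℝ) := by exact_mod_cast hy2
      refine ⟨?_, ?_, by linarith, ?_⟩
      · push_cast; linarith
      · push_cast; linarith
      · have : (q:ℝ) * (N:ℝ) * (1 - (((1:ℤ):ℝ) - (t:ℝ)/(N:ℝ))) = (q:ℝ) * (t:ℝ) := by
          push_cast; field_simp; ring
        rw [this]; exact hy2R
  rw [hset, Set.ncard_coe_finset, Finset.card_product, Finset.card_singleton,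
    Int.card_Icc]
  have : q * t + 1 - (1 - p) = p + q * t := by ring
  rw [this]
  have hnn : 0 ≤ p + q * t := by positivity
  simp [Int.toNat_of_nonneg hnn]
end

section
/- Let p', q, N ∈ ℤ with q, N > 0 and p' > q·N, let ε = 1/(4N²), and let F_B = {(x,y) ∈ ℝ² : ε ≤ x ≤ 1, q·N·(1−x) + 2ε ≤ y ≤ p'}. Then for every integer t with 0 ≤ t < N, the number of integer points in F_B + (t/N, 0) equals p' − q·t. -/
/-- The trapezoid `F_B = {ε ≤ x ≤ 1, qN(1-x) + 2ε ≤ y ≤ p'}` translated by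
`(t/N, 0)` contains exactly `p' - q·t` integer points, for `0 ≤ t < N`. -/
theorem stmt_7 (p' q N t : ℤ) (hq : 0 < q) (hN : 0 < N) (hp' : q * N < p')
    (ht0 : 0 ≤ t) (htN : t < N) :
    ({z : ℤ × ℤ |
        (1 : ℝ) / (4 * (N : ℝ) ^ 2) ≤ (z.1 : ℝ) - (t : ℝ) / (N : ℝ) ∧
        (z.1 : ℝ) - (t : ℝ) / (N : ℝ) ≤ 1 ∧
        (q : ℝ) * (N : ℝ) * (1 - ((z.1 : ℝ) - (t : ℝ) / (N : ℝ)))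
            + 2 * ((1 : ℝ) / (4 * (N : ℝ) ^ 2)) ≤ (z.2 : ℝ) ∧
        (z.2 : ℝ) ≤ (p' : ℝ)}.ncard : ℤ)
      = p' - q * t := by
  have hNR : (0:ℝ) < (N:ℝ) := by exact_mod_cast hN
  have htR0 : (0:ℝ) ≤ (t:ℝ) := by exact_mod_cast ht0
  have htRN : (t:ℝ) < (N:ℝ) := by exact_mod_cast htN
  have hqR : (0:ℝ) < (q:ℝ) := by exact_mod_cast hq
  have hset : {z : ℤ × ℤ |
        (1 : ℝ) / (4 * (N : ℝ) ^ 2) ≤ (z.1 : ℝ) - (t : ℝ) / (N : ℝ) ∧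
        (z.1 : ℝ) - (t : ℝ) / (N : ℝ) ≤ 1 ∧
        (q : ℝ) * (N : ℝ) * (1 - ((z.1 : ℝ) - (t : ℝ) / (N : ℝ)))
            + 2 * ((1 : ℝ) / (4 * (N : ℝ) ^ 2)) ≤ (z.2 : ℝ) ∧
        (z.2 : ℝ) ≤ (p' : ℝ)} = (fun y => ((1:ℤ), y)) '' Set.Icc (q*t+1) p' := by
    ext ⟨a, b⟩
    simp only [Set.mem_setOf_eq, Set.mem_image, Set.mem_Icc, Prod.mk.injEq]
    constructor
    · rintro ⟨h1, h2, h3, h4⟩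
      have ha1 : a = 1 := by
        have hgt : (0:ℝ) < (a:ℝ) := by
          have hε : (0:ℝ) < 1 / (4 * (N:ℝ)^2) := by positivity
          have : (0:ℝ) ≤ (t:ℝ)/(N:ℝ) := by positivity
          linarith
        have hlt : (a:ℝ) < 2 := by
          have : (t:ℝ)/(N:ℝ) < 1 := (div_lt_one hNR).mpr htRN
          linarith
        have h1' : 0 < a := by exact_mod_cast hgt
        have h2' : a < 2 := by exact_mod_cast hlt
        omega
      subst ha1
      have hb1 : (q:ℝ) * (t:ℝ) < (b:ℝ) := by
        have hNne : (N:ℝ) ≠ 0 := ne_of_gt hNR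
        have : (q:ℝ) * (N:ℝ) * (1 - ((1:ℝ) - (t:ℝ)/(N:ℝ))) = (q:ℝ) * (t:ℝ) := by
          field_simp; ring
        push_cast at h3
        rw [this] at h3
        have hε : (0:ℝ) < 2 * (1 / (4 * (N:ℝ)^2)) := by positivity
        linarith
      have hb1' : q * t < b := by exact_mod_cast hb1
      have hb2 : b ≤ p' := by exact_mod_cast h4
      exact ⟨b, ⟨by omega, hb2⟩, rfl, rfl⟩
    · rintro ⟨y, ⟨hy1, hy2⟩, rfl, rfl⟩
      have hNne : (N:ℝ) ≠ 0 := ne_of_gt hNR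
      have hNt : (t:ℝ) ≤ (N:ℝ) - 1 := by
        have h : t + 1 ≤ N := by omega
        have : (t:ℝ) + 1 ≤ (N:ℝ) := by exact_mod_cast h
        linarith
      have hyR : (q:ℝ) * (t:ℝ) + 1 ≤ (y:ℝ) := by exact_mod_cast hy1
      have h1N : (1:ℝ)/(4*(N:ℝ)^2) ≤ 1/(N:ℝ) := by
        rw [div_le_div_iff₀ (by positivity) hNR]; nlinarith
      refine ⟨?_, ?_, ?_, by exact_mod_cast hy2⟩
      · push_cast
        have h2 : (t:ℝ)/(N:ℝ) ≤ ((N:ℝ)-1)/(N:ℝ) := by gcongr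
        have h3 : ((N:ℝ)-1)/(N:ℝ) = 1 - 1/(N:ℝ) := by field_simp
        linarith
      · push_cast
        have : (0:ℝ) ≤ (t:ℝ)/(N:ℝ) := by positivity
        linarith
      · push_cast
        have heq : (q:ℝ) * (N:ℝ) * (1 - ((1:ℝ) - (t:ℝ)/(N:ℝ))) = (q:ℝ) * (t:ℝ) := by
          field_simp; ring
        rw [heq]
        have h5 : (1:ℝ)/(4*(N:ℝ)^2) ≤ 1/2 := by
          rw [div_le_div_iff₀ (by positivity) (by norm_num)]; nlinarith
        linarith
  rw [hset, Set.ncard_image_of_injective _ (fun x y h => by simpa using h)]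
  have : Set.Icc (q*t+1) p' = ↑(Finset.Icc (q*t+1) p') := by simp
  rw [this, Set.ncard_coe_finset, Int.card_Icc]
  have hle : q * t + 1 ≤ p' + 1 := by nlinarith
  push_cast [Int.toNat_of_nonneg (by omega : 0 ≤ p' + 1 - (q*t+1))]
  ring
end

section
/- Let β, γ ∈ ℤ with β, γ > 0, set N = β·γ and ε = 1/(4N²), and let Δ' = {(x,y) ∈ ℝ² : x ≥ ε, y ≥ ε, γ·(1−x) ≥ y}. Then for every integer t with 0 ≤ t < N, the number of integer points in Δ' + (t/N, 0) equals ⌊t/β⌋. -/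
/-- The triangle `Δ' = {x,y ≥ ε, γ(1-x) ≥ y}` translated by `(t/N, 0)` with
`N = βγ` contains exactly `⌊t/β⌋` integer points, for `0 ≤ t < N`. -/
theorem stmt_8 (β γ t : ℤ) (hβ : 0 < β) (hγ : 0 < γ)
    (ht0 : 0 ≤ t) (htN : t < β * γ) :
    ({p : ℤ × ℤ |
        (1 : ℝ) / (4 * ((β : ℝ) * γ) ^ 2) ≤ (p.1 : ℝ) - (t : ℝ) / ((β : ℝ) * γ) ∧
        (1 : ℝ) / (4 * ((β : ℝ) * γ) ^ 2) ≤ (p.2 : ℝ) ∧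
        (p.2 : ℝ) ≤ (γ : ℝ) * (1 - ((p.1 : ℝ) - (t : ℝ) / ((β : ℝ) * γ)))}.ncard : ℤ)
      = t / β := by
  have hβR : (0:ℝ) < β := by exact_mod_cast hβ
  have hγR : (0:ℝ) < γ := by exact_mod_cast hγ
  have hN : (0:ℝ) < (β:ℝ) * γ := by positivity
  have hN1 : (1:ℝ) ≤ (β:ℝ) * γ := by
    have h : (0:ℤ) < β * γ := mul_pos hβ hγ
    have : (1:ℤ) ≤ β * γ := by omega
    exact_mod_cast this
  set q : ℤ := t / β with hq
  have hq0 : 0 ≤ q := Int.ediv_nonneg ht0 hβ.le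
  have hT0 : (0:ℝ) ≤ (t:ℝ) / ((β:ℝ) * γ) := by positivity
  have htR : (t:ℝ) ≤ (β:ℝ)*γ - 1 := by
    have h : t ≤ β * γ - 1 := by omega
    exact_mod_cast h
  -- q ≤ t/β as reals
  have hqle : (q:ℝ) * β ≤ (t:ℝ) := by
    have : q * β ≤ t := Int.ediv_mul_le t (by omega)
    exact_mod_cast this
  have hset : {p : ℤ × ℤ |
        (1 : ℝ) / (4 * ((β : ℝ) * γ) ^ 2) ≤ (p.1 : ℝ) - (t : ℝ) / ((β : ℝ) * γ) ∧
        (1 : ℝ) / (4 * ((β : ℝ) * γ) ^ 2) ≤ (p.2 : ℝ) ∧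
        (p.2 : ℝ) ≤ (γ : ℝ) * (1 - ((p.1 : ℝ) - (t : ℝ) / ((β : ℝ) * γ)))}
      = (fun y => ((1:ℤ), y)) '' Set.Icc 1 q := by
    ext ⟨x, y⟩
    simp only [Set.mem_setOf_eq, Set.mem_image, Set.mem_Icc, Prod.mk.injEq]
    constructor
    · rintro ⟨h1, h2, h3⟩
      have hε : (0:ℝ) < 1 / (4 * ((β : ℝ) * γ) ^ 2) := by positivity
      have hx1 : (1:ℤ) ≤ x := by
        have hx : (0:ℝ) < (x:ℝ) := by linarith
        have : (0:ℤ) < x := by exact_mod_cast hx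
        omega
      have hy1 : (1:ℤ) ≤ y := by
        have hy : (0:ℝ) < (y:ℝ) := by linarith
        have : (0:ℤ) < y := by exact_mod_cast hy
        omega
      have hTlt : (t:ℝ) / ((β:ℝ) * γ) < 1 := by
        rw [div_lt_one hN]
        have : (t:ℤ) < β * γ := htN
        exact_mod_cast this
      have hx2 : x < 2 := by
        by_contra h
        push_neg at h
        have hxR : (2:ℝ) ≤ (x:ℝ) := by exact_mod_cast h
        have hyR : (1:ℝ) ≤ (y:ℝ) := by exact_mod_cast hy1
        nlinarith
      have hxeq : x = 1 := by omega
      refine ⟨y, ⟨hy1, ?_⟩, hxeq.symm, rfl⟩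
      -- y ≤ q
      subst hxeq
      have hyt : (y:ℝ) * β ≤ t := by
        have hx1R : ((1:ℤ):ℝ) = (1:ℝ) := by norm_num
        rw [hx1R] at h3
        have : (y:ℝ) ≤ (γ:ℝ) * ((t:ℝ) / ((β:ℝ) * γ)) := by
          have := h3; ring_nf at this ⊢; linarith
        have hg : (γ:ℝ) * ((t:ℝ) / ((β:ℝ) * γ)) = (t:ℝ) / β := by
          field_simp
        rw [hg] at this
        calc (y:ℝ) * β ≤ ((t:ℝ)/β) * β := by nlinarith
        _ = t := by field_simp
      have : y * β ≤ t := by exact_mod_cast hyt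
      exact Int.le_ediv_iff_mul_le hβ |>.mpr this
    · rintro ⟨y', ⟨hy1, hy2⟩, hx, hy⟩
      subst hx; subst hy
      have hy1R : (1:ℝ) ≤ (y':ℝ) := by exact_mod_cast hy1
      have hy2R : (y':ℝ) ≤ q := by exact_mod_cast hy2
      have hεsmall : (1:ℝ) / (4 * ((β : ℝ) * γ) ^ 2) ≤ 1 / ((β:ℝ)*γ) := by
        rw [div_le_div_iff₀ (by positivity) hN]
        nlinarith
      have h1N : (1:ℝ)/((β:ℝ)*γ) ≤ 1 := by
        rw [div_le_one hN]; exact hN1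
      refine ⟨?_, by linarith, ?_⟩
      · push_cast
        have : (t:ℝ) / ((β:ℝ) * γ) ≤ 1 - 1/((β:ℝ)*γ) := by
          rw [div_le_iff₀ hN]
          have : ((β:ℝ)*γ) * (1 - 1/((β:ℝ)*γ)) = (β:ℝ)*γ - 1 := by field_simp
          linarith [htR, this.symm ▸ le_refl ((β:ℝ)*γ - 1)]
        linarith
      · push_cast
        have hg : (γ:ℝ) * (1 - (1 - (t:ℝ) / ((β:ℝ) * γ))) = (t:ℝ) / β := by
          field_simp; ring
        rw [hg]
        rw [le_div_iff₀ hβR]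
        linarith [mul_le_mul_of_nonneg_right hy2R hβR.le]
  rw [hset, Set.ncard_image_of_injective _ (fun a b h => (Prod.mk.injEq _ _ _ _ ▸ h).2),
    ← Finset.coe_Icc, Set.ncard_coe_finset, Int.card_Icc]
  omega
end

section
/- Let β, γ, r' ∈ ℤ with β, γ > 0 and r' > γ, set N = β·γ and ε = 1/(4N²), and let F_D = {(x,y) ∈ ℝ² : ε ≤ x ≤ 1, γ·(1−x) + 2ε ≤ y ≤ r'}. Then for every integer t with 0 ≤ t < N, the number of integer points in F_D + (t/N, 0) equals r' − ⌊t/β⌋. -/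
/-- The trapezoid `F_D = {ε ≤ x ≤ 1, γ(1-x) + 2ε ≤ y ≤ r'}` translated by
`(t/N, 0)` with `N = βγ` contains exactly `r' - ⌊t/β⌋` integer points. -/
theorem stmt_9 (β γ r' t : ℤ) (hβ : 0 < β) (hγ : 0 < γ) (hr' : γ < r')
    (ht0 : 0 ≤ t) (htN : t < β * γ) :
    ({z : ℤ × ℤ |
        (1 : ℝ) / (4 * ((β : ℝ) * γ) ^ 2) ≤ (z.1 : ℝ) - (t : ℝ) / ((β : ℝ) * γ) ∧
        (z.1 : ℝ) - (t : ℝ) / ((β : ℝ) * γ) ≤ 1 ∧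
        (γ : ℝ) * (1 - ((z.1 : ℝ) - (t : ℝ) / ((β : ℝ) * γ)))
            + 2 * ((1 : ℝ) / (4 * ((β : ℝ) * γ) ^ 2)) ≤ (z.2 : ℝ) ∧
        (z.2 : ℝ) ≤ (r' : ℝ)}.ncard : ℤ)
      = r' - t / β := by
  have hβR : (0:ℝ) < β := by exact_mod_cast hβ
  have hγR : (0:ℝ) < γ := by exact_mod_cast hγ
  have hN : (0:ℝ) < (β : ℝ) * γ := by positivity
  have hβ1 : (1:ℝ) ≤ β := by exact_mod_cast hβ
  have hγ1 : (1:ℝ) ≤ γ := by exact_mod_cast hγ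
  have hN1 : (1:ℝ) ≤ (β : ℝ) * γ := by nlinarith
  have ht0R : (0:ℝ) ≤ t := by exact_mod_cast ht0
  have htNR : (t:ℝ) < (β:ℝ) * γ := by exact_mod_cast htN
  have ht1R : (t:ℝ) ≤ (β:ℝ) * γ - 1 := by
    have : t ≤ β * γ - 1 := by omega
    exact_mod_cast this
  have hdiv : t / β < r' := by
    have h1 : t / β < γ := (Int.ediv_lt_iff_lt_mul hβ).2 (by linarith [mul_comm β γ])
    omega
  -- real value of t/β floor bound: t ≤ β*(t/β) + (β-1)
  have hfloor : (t:ℝ) ≤ (β:ℝ) * ((t/β : ℤ) : ℝ) + ((β:ℝ) - 1) := by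
    have h := Int.emod_emod_of_dvd t (dvd_refl β)
    have h1 : β * (t / β) + t % β = t := Int.mul_ediv_add_emod t β
    have h2 : t % β ≤ β - 1 := by
      have := Int.emod_lt_of_pos t hβ; omega
    have : t ≤ β * (t / β) + (β - 1) := by omega
    exact_mod_cast this
  have key : {z : ℤ × ℤ |
        (1 : ℝ) / (4 * ((β : ℝ) * γ) ^ 2) ≤ (z.1 : ℝ) - (t : ℝ) / ((β : ℝ) * γ) ∧
        (z.1 : ℝ) - (t : ℝ) / ((β : ℝ) * γ) ≤ 1 ∧
        (γ : ℝ) * (1 - ((z.1 : ℝ) - (t : ℝ) / ((β : ℝ) * γ)))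
            + 2 * ((1 : ℝ) / (4 * ((β : ℝ) * γ) ^ 2)) ≤ (z.2 : ℝ) ∧
        (z.2 : ℝ) ≤ (r' : ℝ)} = (fun n => ((1:ℤ), n)) '' ↑(Finset.Icc (t/β + 1) r') := by
    ext z
    simp only [Set.mem_setOf_eq, Set.mem_image, Finset.coe_Icc, Set.mem_Icc]
    constructor
    · rintro ⟨h1, h2, h3, h4⟩
      have hε : (0:ℝ) < 1 / (4 * ((β : ℝ) * γ) ^ 2) := by positivity
      have htN0 : (0:ℝ) ≤ (t:ℝ) / ((β:ℝ) * γ) := by positivity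
      have htN1 : (t:ℝ) / ((β:ℝ) * γ) < 1 := by
        rw [div_lt_one hN]; exact htNR
      have hx1 : z.1 = 1 := by
        have hgt : (0:ℝ) < (z.1 : ℝ) := by linarith
        have hlt : (z.1 : ℝ) < 2 := by linarith
        have : (0:ℤ) < z.1 := by exact_mod_cast hgt
        have : z.1 < 2 := by exact_mod_cast hlt
        omega
      refine ⟨z.2, ⟨?_, ?_⟩, Prod.ext hx1.symm rfl⟩
      · -- t/β + 1 ≤ z.2
        have h3' : (γ:ℝ) * ((t:ℝ) / ((β:ℝ) * γ)) < (z.2 : ℝ) := by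
          rw [hx1] at h3; push_cast at h3; nlinarith
        have : (t:ℝ) / (β:ℝ) < (z.2 : ℝ) := by
          rw [div_lt_iff₀ hβR]
          have : (γ:ℝ) * ((t:ℝ) / ((β:ℝ) * γ)) = (t:ℝ) / β := by
            field_simp
          nlinarith [this ▸ h3', (div_lt_iff₀ hβR).1 (this ▸ h3')]
        have ht' : t < z.2 * β := by
          have : (t:ℝ) < (z.2:ℝ) * β := by
            rw [div_lt_iff₀ hβR] at this; linarith
          exact_mod_cast this
        have := (Int.ediv_lt_iff_lt_mul hβ).2 ht'
        omega
      · exact_mod_cast h4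
    · rintro ⟨n, ⟨hn1, hn2⟩, rfl⟩
      simp only
      have hnR : ((t/β : ℤ) : ℝ) + 1 ≤ (n : ℝ) := by exact_mod_cast hn1
      have hnR2 : (n : ℝ) ≤ (r' : ℝ) := by exact_mod_cast hn2
      have hεβ : 2 * ((1:ℝ) / (4 * ((β : ℝ) * γ) ^ 2)) ≤ 1 / β := by
        rw [mul_one_div, div_le_div_iff₀ (by positivity) hβR]
        nlinarith
      have he : (γ:ℝ) * (1 - ((1:ℝ) - (t:ℝ) / ((β:ℝ) * γ))) = (t:ℝ) / β := by
        field_simp; ring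
      have htβ : (t:ℝ) / β ≤ ((t/β : ℤ) : ℝ) + 1 - 1/β := by
        rw [div_le_iff₀ hβR, sub_mul, div_mul_cancel₀ _ (ne_of_gt hβR)]
        nlinarith [hfloor]
      refine ⟨?_, ?_, ?_, hnR2⟩
      · -- ε ≤ 1 - t/N
        push_cast
        rw [le_sub_iff_add_le, div_add_div _ _ (by positivity) (ne_of_gt hN),
          div_le_one (by positivity)]
        nlinarith
      · push_cast
        have : (0:ℝ) ≤ (t:ℝ) / ((β:ℝ) * γ) := by positivity
        linarith
      · -- γ * (t/N) + 2ε ≤ n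
        push_cast
        rw [he]
        linarith
  rw [key]
  rw [Set.ncard_image_of_injective _ (fun a b h => (Prod.mk.injEq _ _ _ _ ▸ h).2)]
  rw [Set.ncard_coe_finset, Int.card_Icc]
  have : r' + 1 - (t / β + 1) = r' - t / β := by ring
  rw [this, Int.toNat_of_nonneg (by omega)]
end

section
/- Let N, K ∈ ℤ with N, K > 0, let 0 < δ < 1/N be rational, and define the parallelogram R = {(x,y) ∈ ℝ² : 0 ≤ y ≤ K·N − 1/2, 1 − 1/N + δ/8 − y/N ≤ x ≤ 1 − δ/8 − y/N}. Then for every real λ: if the fractional part of λ lies in [δ/8, 1/N − δ/8] modulo 1/N (i.e., λ ∈ Y_δ := {t/N + τ : t ∈ ℤ, δ/8 ≤ τ ≤ 1/N − δ/8}), then |(R + (λ,0)) ∩ ℤ²| = K; otherwise |(R + (λ,0)) ∩ ℤ²| = 0. -/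
/-- The parallelogram `R` gates translations: `|R + (λ,0)| = K` when `λ ∈ Y_δ`
and `0` otherwise. -/
theorem stmt_12 (N K : ℤ) (hN : 0 < N) (hK : 0 < K) (δ : ℚ) (hδ0 : 0 < δ)
    (hδN : (δ : ℚ) < 1 / N) (lam : ℝ)
    (R : Set (ℝ × ℝ))
    (hR : R = {p : ℝ × ℝ | 0 ≤ p.2 ∧ p.2 ≤ (K : ℝ) * N - 1 / 2 ∧
      1 - 1 / (N : ℝ) + (δ : ℝ) / 8 - p.2 / N ≤ p.1 ∧
      p.1 ≤ 1 - (δ : ℝ) / 8 - p.2 / N}) :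
    ((∃ t : ℤ, ∃ τ : ℝ, (δ : ℝ) / 8 ≤ τ ∧ τ ≤ 1 / (N : ℝ) - (δ : ℝ) / 8 ∧
        lam = (t : ℝ) / N + τ) →
      ({z : ℤ × ℤ | ((z.1 : ℝ) - lam, (z.2 : ℝ)) ∈ R}.ncard : ℤ) = K) ∧
    (¬ (∃ t : ℤ, ∃ τ : ℝ, (δ : ℝ) / 8 ≤ τ ∧ τ ≤ 1 / (N : ℝ) - (δ : ℝ) / 8 ∧
        lam = (t : ℝ) / N + τ) →
      {z : ℤ × ℤ | ((z.1 : ℝ) - lam, (z.2 : ℝ)) ∈ R}.ncard = 0) := by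
  have hN' : (0:ℝ) < (N:ℝ) := by exact_mod_cast hN
  have hNne : (N:ℝ) ≠ 0 := ne_of_gt hN'
  have hδ' : (0:ℝ) < (δ:ℝ) := by exact_mod_cast hδ0
  have hone : (1/(N:ℝ)) * N = 1 := by field_simp
  constructor
  · rintro ⟨t, τ, hτ1, hτ2, rfl⟩
    have htqr : N * (t / N) + t % N = t := Int.mul_ediv_add_emod t N
    have hr0 : 0 ≤ t % N := Int.emod_nonneg t (ne_of_gt hN)
    have hrN : t % N < N := Int.emod_lt_of_pos t hN
    have ht' : (t:ℝ) = (N:ℝ) * ((t/N : ℤ):ℝ) + ((t % N : ℤ):ℝ) := by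
      exact_mod_cast htqr.symm
    have hset : {z : ℤ × ℤ | ((z.1 : ℝ) - ((t:ℝ)/N + τ), (z.2 : ℝ)) ∈ R}
        = (fun j : ℤ => (t/N - j + 1, t % N + N * j)) '' ↑(Finset.Icc (0:ℤ) (K-1)) := by
      ext ⟨a, b⟩
      simp only [hR, Set.mem_setOf_eq, Finset.coe_Icc, Set.mem_image, Set.mem_Icc]
      constructor
      · rintro ⟨hb0, hb1, hx1, hx2⟩
        have hbdiv : ((b:ℝ)/N) * N = b := div_mul_cancel₀ _ hNne
        have htdiv : ((t:ℝ)/N) * N = t := div_mul_cancel₀ _ hNne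
        set m : ℤ := N * (a - 1) + b - t with hm
        have hmR : (m:ℝ) = (N:ℝ) * ((a:ℝ) - 1) + (b:ℝ) - (t:ℝ) := by rw [hm]; push_cast; ring
        have hm2 : (m:ℝ) < 1 := by
          rw [hmR]
          have h2 : (a:ℝ) - 1 + (b:ℝ)/N - (t:ℝ)/N < 1/N := by linarith
          have h2' := mul_lt_mul_of_pos_right h2 hN'
          nlinarith [h2', hbdiv, htdiv, hone]
        have hm1 : (-1:ℝ) < (m:ℝ) := by
          rw [hmR]
          have h1 : -(1/(N:ℝ)) < (a:ℝ) - 1 + (b:ℝ)/N - (t:ℝ)/N := by nlinarith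
          have h1' := mul_lt_mul_of_pos_right h1 hN'
          nlinarith [h1', hbdiv, htdiv, hone]
        have hm0 : m = 0 := by
          have a1 : (-1:ℤ) < m := by exact_mod_cast hm1
          have a2 : m < 1 := by exact_mod_cast hm2
          omega
        refine ⟨t/N - a + 1, ⟨?_, ?_⟩, ?_⟩
        · -- 0 ≤ j
          have hb : b = t % N + N * (t/N - a + 1) := by linear_combination hm0 - htqr
          have hb0' : 0 ≤ b := by exact_mod_cast hb0
          nlinarith [hb0', hrN, hr0]
        · -- j ≤ K - 1
          have hb : b = t % N + N * (t/N - a + 1) := by linear_combination hm0 - htqr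
          have hbK : (b:ℝ) < (K:ℝ) * N := by linarith
          have hbK' : b < K * N := by exact_mod_cast hbK
          nlinarith [hbK', hr0]
        · have hb : b = t % N + N * (t/N - a + 1) := by linear_combination hm0 - htqr
          refine Prod.ext ?_ ?_
          · simp; ring
          · simp [hb.symm]
      · rintro ⟨j, ⟨hj0, hj1⟩, heq⟩
        obtain ⟨ha, hb⟩ := Prod.mk.injEq .. ▸ heq
        subst ha hb
        have hd1 : (((t % N : ℤ):ℝ) + (N:ℝ)*(j:ℝ))/N = ((t % N : ℤ):ℝ)/N + (j:ℝ) := by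
          field_simp
        have hd2 : ((t:ℝ))/N = ((t/N : ℤ):ℝ) + ((t % N : ℤ):ℝ)/N := by
          rw [ht']; field_simp
        have hbKN : t % N + N * j ≤ K * N - 1 := by nlinarith
        refine ⟨?_, ?_, ?_, ?_⟩
        · push_cast
          have : (0:ℤ) ≤ t % N + N * j := by positivity
          exact_mod_cast this
        · push_cast
          have : ((t % N + N * j : ℤ):ℝ) ≤ ((K * N - 1 : ℤ):ℝ) := by exact_mod_cast hbKN
          push_cast at this
          linarith
        · push_cast
          push_cast at hd1 hd2
          rw [hd2]
          linarith [hd1, hτ2]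
        · push_cast
          push_cast at hd1 hd2
          rw [hd2]
          linarith [hd1, hτ1]
    rw [hset, Set.ncard_image_of_injOn, Set.ncard_coe_finset, Int.card_Icc]
    · omega
    · intro j _ j' _ h
      have h2 := congrArg Prod.snd h
      simp only at h2
      have : N * j = N * j' := by linarith
      exact mul_left_cancel₀ (ne_of_gt hN) this
  · intro hne
    have hempty : {z : ℤ × ℤ | ((z.1 : ℝ) - lam, (z.2 : ℝ)) ∈ R} = ∅ := by
      ext ⟨a, b⟩
      simp only [hR, Set.mem_setOf_eq, Set.mem_empty_iff_false, iff_false]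
      rintro ⟨hb0, hb1, hx1, hx2⟩
      apply hne
      refine ⟨N * (a - 1) + b, lam - ((a:ℝ) - 1) - (b:ℝ)/N, ?_, ?_, ?_⟩
      · linarith
      · linarith
      · have : ((N * (a - 1) + b : ℤ):ℝ)/N = ((a:ℝ) - 1) + (b:ℝ)/N := by
          push_cast; field_simp
        rw [this]; ring
    rw [hempty]
    simp
end

section
/- For every n ≥ 2 and all elements g₁,…,g_n, h₁,…,h_n of a commutative ring, 3^{n−1}·g₁⋯g_n + h₁⋯h_n = Σ over nonempty subsets S ⊆ {1,…,n} of 3^{δ(S)} · (∏_{j ∉ S} g_j) · (∏_{j ∈ S} (g_j + σ_j(S)·τ_j(S)·h_j)), where σ_j(S) = 1 if j−1 ∈ S and −1 otherwise, τ_j(S) = 1 if max(S) > j and −1 if max(S) ≤ j, and δ(S) = max(0, n − max(S) − 1). -/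
open Finset

section Aux
variable {R : Type*} [CommRing R] (g h : ℕ → R)

private def Psgn (T : Finset ℕ) : R :=
  ∏ j ∈ T, (g j + (if j - 1 ∈ T then (1 : R) else -1) * h j)

private def AA (m : ℕ) : R :=
  ∑ T ∈ (Icc 1 m).powerset, (∏ j ∈ Icc 1 m \ T, g j) * Psgn g h T

private def CC (m : ℕ) : R :=
  ∑ T ∈ (Icc 1 m).powerset,
    (∏ j ∈ Icc 1 m \ T, g j) * Psgn g h T * (if m ∈ T then 1 else -1)

private lemma Icc_one_succ (m : ℕ) : Icc 1 (m + 1) = insert (m + 1) (Icc 1 m) := by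
  ext x; simp [Nat.lt_succ_iff]; omega

private lemma Psgn_insert {m : ℕ} {T : Finset ℕ} (hT : T ⊆ Icc 1 m) :
    Psgn g h (insert (m + 1) T) =
      (g (m + 1) + (if m ∈ T then (1 : R) else -1) * h (m + 1)) * Psgn g h T := by
  have hm : m + 1 ∉ T := fun hx => by have := mem_Icc.mp (hT hx); omega
  rw [Psgn, prod_insert hm]
  congr 1
  · congr 2
    simp only [Nat.add_sub_cancel, mem_insert]
    have : ¬ (m = m + 1) := by omega
    simp [this]
  · refine prod_congr rfl fun j hj => ?_
    have hj' := mem_Icc.mp (hT hj)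
    have : j - 1 ∈ insert (m + 1) T ↔ j - 1 ∈ T := by
      simp only [mem_insert]
      constructor
      · rintro (hc | hc); · omega
        · exact hc
      · exact fun hc => Or.inr hc
    rw [if_congr this rfl rfl]

private lemma sdiff_insert_eq {m : ℕ} {T : Finset ℕ} (hT : T ⊆ Icc 1 m) :
    Icc 1 (m + 1) \ insert (m + 1) T = Icc 1 m \ T := by
  ext x
  have hxT : x ∈ T → 1 ≤ x ∧ x ≤ m := fun hx => mem_Icc.mp (hT hx)
  simp only [mem_sdiff, mem_Icc, mem_insert, not_or]
  constructor
  · rintro ⟨⟨h1, h2⟩, h3, h4⟩; exact ⟨⟨h1, by omega⟩, h4⟩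
  · rintro ⟨⟨h1, h2⟩, h3⟩; exact ⟨⟨h1, by omega⟩, by omega, h3⟩

private lemma sdiff_not_mem_eq {m : ℕ} {T : Finset ℕ} (hT : T ⊆ Icc 1 m) :
    Icc 1 (m + 1) \ T = insert (m + 1) (Icc 1 m \ T) := by
  have hm : m + 1 ∉ T := fun hx => by have := mem_Icc.mp (hT hx); omega
  ext x
  simp only [mem_sdiff, mem_Icc, mem_insert]
  constructor
  · rintro ⟨⟨h1, h2⟩, h3⟩
    rcases Nat.lt_or_ge x (m+1) with hc | hc
    · exact Or.inr ⟨⟨h1, by omega⟩, h3⟩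
    · left; omega
  · rintro (rfl | ⟨⟨h1, h2⟩, h3⟩)
    · exact ⟨⟨by omega, le_rfl⟩, hm⟩
    · exact ⟨⟨h1, by omega⟩, h3⟩

private lemma AA_succ (m : ℕ) :
    AA g h (m + 1) = 2 * g (m + 1) * AA g h m + h (m + 1) * CC g h m := by
  have hm : m + 1 ∉ Icc 1 m := by simp
  rw [AA, Icc_one_succ, sum_powerset_insert hm]
  have e1 : ∀ T ∈ (Icc 1 m).powerset,
      (∏ j ∈ insert (m+1) (Icc 1 m) \ T, g j) * Psgn g h T
        = g (m+1) * ((∏ j ∈ Icc 1 m \ T, g j) * Psgn g h T) := by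
    intro T hT
    rw [← Icc_one_succ, sdiff_not_mem_eq (mem_powerset.mp hT),
      prod_insert (by simp)]
    ring
  have e2 : ∀ T ∈ (Icc 1 m).powerset,
      (∏ j ∈ insert (m+1) (Icc 1 m) \ insert (m+1) T, g j) * Psgn g h (insert (m+1) T)
        = g (m+1) * ((∏ j ∈ Icc 1 m \ T, g j) * Psgn g h T)
          + h (m+1) * ((∏ j ∈ Icc 1 m \ T, g j) * Psgn g h T * (if m ∈ T then 1 else -1)) := by
    intro T hT
    rw [← Icc_one_succ, sdiff_insert_eq (mem_powerset.mp hT),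
      Psgn_insert g h (mem_powerset.mp hT)]
    ring
  rw [sum_congr rfl e1, sum_congr rfl e2, sum_add_distrib, ← mul_sum, ← mul_sum, ← AA, ← CC]
  ring

private lemma CC_succ (m : ℕ) : CC g h (m + 1) = h (m + 1) * CC g h m := by
  have hm : m + 1 ∉ Icc 1 m := by simp
  rw [CC, Icc_one_succ, sum_powerset_insert hm]
  have e1 : ∀ T ∈ (Icc 1 m).powerset,
      (∏ j ∈ insert (m+1) (Icc 1 m) \ T, g j) * Psgn g h T * (if m + 1 ∈ T then (1:R) else -1)
        = (-g (m+1)) * ((∏ j ∈ Icc 1 m \ T, g j) * Psgn g h T) := by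
    intro T hT
    have hmT : m + 1 ∉ T := fun hx => by
      have := mem_Icc.mp (mem_powerset.mp hT hx); omega
    rw [← Icc_one_succ, sdiff_not_mem_eq (mem_powerset.mp hT),
      prod_insert (by simp), if_neg hmT]
    ring
  have e2 : ∀ T ∈ (Icc 1 m).powerset,
      (∏ j ∈ insert (m+1) (Icc 1 m) \ insert (m+1) T, g j) * Psgn g h (insert (m+1) T)
          * (if m + 1 ∈ insert (m+1) T then (1:R) else -1)
        = g (m+1) * ((∏ j ∈ Icc 1 m \ T, g j) * Psgn g h T)
          + h (m+1) * ((∏ j ∈ Icc 1 m \ T, g j) * Psgn g h T * (if m ∈ T then 1 else -1)) := by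
    intro T hT
    rw [← Icc_one_succ, sdiff_insert_eq (mem_powerset.mp hT),
      Psgn_insert g h (mem_powerset.mp hT), if_pos (mem_insert_self _ _)]
    ring
  rw [sum_congr rfl e1, sum_congr rfl e2, sum_add_distrib, ← mul_sum, ← mul_sum, ← mul_sum,
    ← AA, ← CC]
  ring


private lemma CC_eq (m : ℕ) : CC g h m = -∏ j ∈ Icc 1 m, h j := by
  induction m with
  | zero => simp [CC, Psgn]
  | succ k ih =>
      rw [CC_succ, ih, prod_Icc_succ_top (by omega)]
      ring

private lemma AA_zero : AA g h 0 = 1 := by simp [AA, Psgn]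

private lemma AA_succ' (m : ℕ) :
    AA g h (m + 1) = 2 * g (m + 1) * AA g h m - ∏ j ∈ Icc 1 (m+1), h j := by
  rw [AA_succ, CC_eq, prod_Icc_succ_top (by omega)]
  ring

private def DD (m : ℕ) : R := g (m + 1) * AA g h m + ∏ j ∈ Icc 1 (m + 1), h j

private lemma key (k : ℕ) :
    ∑ m ∈ range (k + 1), (3 : R) ^ (k - m - 1) * (∏ j ∈ Icc (m + 2) (k + 1), g j) * DD g h m
      = 3 ^ k * ∏ j ∈ Icc 1 (k + 1), g j + ∏ j ∈ Icc 1 (k + 1), h j := by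
  induction k with
  | zero => simp [DD, AA_zero]
  | succ k ih =>
      rw [sum_range_succ, sum_range_succ]
      rw [sum_range_succ] at ih
      have h1 : ∀ m ∈ range k,
          (3 : R) ^ (k + 1 - m - 1) * (∏ j ∈ Icc (m + 2) (k + 2), g j) * DD g h m
            = 3 * g (k + 2) *
              ((3 : R) ^ (k - m - 1) * (∏ j ∈ Icc (m + 2) (k + 1), g j) * DD g h m) := by
        intro m hm
        have hmk : m < k := mem_range.mp hm
        have he : k + 1 - m - 1 = (k - m - 1) + 1 := by omega
        rw [he, pow_succ, prod_Icc_succ_top (by omega : m + 2 ≤ (k+1) + 1)]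
        ring
      rw [sum_congr rfl h1, ← mul_sum]
      have h2 : ∑ m ∈ range k,
          (3 : R) ^ (k - m - 1) * (∏ j ∈ Icc (m + 2) (k + 1), g j) * DD g h m
            = 3 ^ k * ∏ j ∈ Icc 1 (k + 1), g j + (∏ j ∈ Icc 1 (k + 1), h j)
              - (3 : R) ^ (k - k - 1) * (∏ j ∈ Icc (k + 2) (k + 1), g j) * DD g h k := by
        rw [← ih]; ring
      rw [h2]
      have e0 : (k : ℕ) - k - 1 = 0 := by omega
      have e1 : (k + 1 : ℕ) - k - 1 = 0 := by omega
      have e2 : (k + 1 : ℕ) - (k + 1) - 1 = 0 := by omega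
      rw [e0, e1, e2]
      rw [Icc_self, Icc_eq_empty (by omega : ¬ (k + 2 ≤ k + 1)),
        Icc_eq_empty (by omega : ¬ (k + 1 + 2 ≤ k + 2)), prod_empty, prod_singleton]
      rw [DD, DD, AA_succ', prod_Icc_succ_top (by omega : 1 ≤ (k+1) + 1),
        prod_Icc_succ_top (by omega : 1 ≤ (k+1) + 1), pow_succ]
      ring


private lemma sup_insert_eq {m : ℕ} {T : Finset ℕ} (hT : T ⊆ Icc 1 m) :
    (insert (m + 1) T).sup id = m + 1 := by
  rw [sup_insert]
  have : T.sup id ≤ m + 1 := Finset.sup_le fun x hx => by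
    have := mem_Icc.mp (hT hx); simpa using by omega
  simpa using sup_eq_left.mpr this

private lemma group (n : ℕ) (F : Finset ℕ → R) :
    ∑ S ∈ (Icc 1 n).powerset.filter (· ≠ ∅), F S
      = ∑ m ∈ range n, ∑ T ∈ (Icc 1 m).powerset, F (insert (m + 1) T) := by
  rw [sum_sigma']
  refine sum_nbij' (fun S => ⟨S.sup id - 1, S.erase (S.sup id)⟩)
    (fun p => insert (p.1 + 1) p.2) ?_ ?_ ?_ ?_ ?_
  · intro S hS
    simp only [mem_filter, mem_powerset] at hS
    obtain ⟨hSn, hSne⟩ := hS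
    have hne : S.Nonempty := nonempty_iff_ne_empty.mpr hSne
    have hM : S.sup id ∈ S := by
      have := S.max'_mem hne
      rwa [max'_eq_sup', sup'_eq_sup] at this
    have hM' := mem_Icc.mp (hSn hM)
    simp only [mem_sigma, mem_range, mem_powerset]
    constructor
    · omega
    · intro x hx
      have hx1 := mem_of_mem_erase hx
      have hx2 : x ≠ S.sup id := ne_of_mem_erase hx
      have hx3 : x ≤ S.sup id := le_sup (f := id) hx1
      have := mem_Icc.mp (hSn hx1)
      simp only [mem_Icc]; omega
  · intro p hp
    simp only [mem_sigma, mem_range, mem_powerset] at hp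
    simp only [mem_filter, mem_powerset]
    constructor
    · intro x hx
      rcases mem_insert.mp hx with rfl | hx
      · simp only [mem_Icc]; omega
      · have := mem_Icc.mp (hp.2 hx)
        simp only [mem_Icc]; omega
    · exact (insert_nonempty _ _).ne_empty
  · intro S hS
    simp only [mem_filter, mem_powerset] at hS
    obtain ⟨hSn, hSne⟩ := hS
    have hne : S.Nonempty := nonempty_iff_ne_empty.mpr hSne
    have hM : S.sup id ∈ S := by
      have := S.max'_mem hne
      rwa [max'_eq_sup', sup'_eq_sup] at this
    have hM' := mem_Icc.mp (hSn hM)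
    have h1 : S.sup id - 1 + 1 = S.sup id := by omega
    show insert (S.sup id - 1 + 1) (S.erase (S.sup id)) = S
    rw [h1, insert_erase hM]
  · intro p hp
    simp only [mem_sigma, mem_range, mem_powerset] at hp
    have hs := sup_insert_eq hp.2
    have hmT : p.1 + 1 ∉ p.2 := fun hx => by have := mem_Icc.mp (hp.2 hx); omega
    refine Sigma.ext ?_ (heq_of_eq ?_) <;> simp [hs, erase_insert hmT]
  · intro S hS
    simp only [mem_filter, mem_powerset] at hS
    obtain ⟨hSn, hSne⟩ := hS
    have hne : S.Nonempty := nonempty_iff_ne_empty.mpr hSne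
    have hM : S.sup id ∈ S := by
      have := S.max'_mem hne
      rwa [max'_eq_sup', sup'_eq_sup] at this
    have hM' := mem_Icc.mp (hSn hM)
    have h1 : S.sup id - 1 + 1 = S.sup id := by omega
    show F S = F (insert (S.sup id - 1 + 1) (S.erase (S.sup id)))
    rw [h1, insert_erase hM]


private lemma sdiff_split {m n : ℕ} (hmn : m + 1 ≤ n) {T : Finset ℕ} (hT : T ⊆ Icc 1 m) :
    ∏ j ∈ Icc 1 n \ insert (m + 1) T, g j
      = (∏ j ∈ Icc 1 m \ T, g j) * ∏ j ∈ Icc (m + 2) n, g j := by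
  rw [← prod_union (by
    rw [disjoint_left]
    intro x hx1 hx2
    have h1 := (mem_sdiff.mp hx1).1
    have := mem_Icc.mp h1
    have := mem_Icc.mp hx2
    omega)]
  congr 1
  ext x
  simp only [mem_sdiff, mem_union, mem_insert, mem_Icc, not_or]
  by_cases hx : x ∈ T
  · have := mem_Icc.mp (hT hx)
    simp [hx] <;> omega
  · simp [hx] <;> omega

private lemma Qprod {m : ℕ} {T : Finset ℕ} (hT : T ⊆ Icc 1 m) :
    (∏ j ∈ insert (m + 1) T, (g j + (if j - 1 ∈ insert (m + 1) T then (1:R) else -1) *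
        (if j < m + 1 then (1:R) else -1) * h j))
      = (g (m + 1) - (if m ∈ T then (1:R) else -1) * h (m + 1)) * Psgn g h T := by
  have hm : m + 1 ∉ T := fun hx => by have := mem_Icc.mp (hT hx); omega
  rw [prod_insert hm]
  congr 1
  · have hmm : (m + 1 - 1 ∈ insert (m + 1) T) ↔ m ∈ T := by
      simp only [Nat.add_sub_cancel, mem_insert]
      constructor
      · rintro (hc | hc); · omega
        · exact hc
      · exact fun hc => Or.inr hc
    by_cases hmT : m ∈ T <;> simp [hmm, hmT] <;> ring
  · rw [Psgn]
    refine prod_congr rfl fun j hj => ?_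
    have hj' := mem_Icc.mp (hT hj)
    have h1 : j < m + 1 := by omega
    have h2 : (j - 1 ∈ insert (m + 1) T) ↔ j - 1 ∈ T := by
      simp only [mem_insert]
      constructor
      · rintro (hc | hc); · omega
        · exact hc
      · exact fun hc => Or.inr hc
    rw [if_pos h1, mul_one, if_congr h2 rfl rfl]

private lemma innerSum14 {m n : ℕ} (hmn : m + 1 ≤ n) :
    ∑ T ∈ (Icc 1 m).powerset,
        ((3:R) ^ (n - (insert (m+1) T).sup id - 1) *
          (∏ j ∈ Icc 1 n \ insert (m+1) T, g j) *
          ∏ j ∈ insert (m+1) T, (g j +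
            (if j - 1 ∈ insert (m+1) T then (1:R) else -1) *
            (if j < (insert (m+1) T).sup id then (1:R) else -1) * h j))
      = (3:R) ^ (n - m - 2) * (∏ j ∈ Icc (m + 2) n, g j) * DD g h m := by
  have e : ∀ T ∈ (Icc 1 m).powerset,
      (3:R) ^ (n - (insert (m+1) T).sup id - 1) *
          (∏ j ∈ Icc 1 n \ insert (m+1) T, g j) *
          ∏ j ∈ insert (m+1) T, (g j +
            (if j - 1 ∈ insert (m+1) T then (1:R) else -1) *
            (if j < (insert (m+1) T).sup id then (1:R) else -1) * h j)
        = (3:R) ^ (n - m - 2) * (∏ j ∈ Icc (m + 2) n, g j) *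
            (g (m+1) * ((∏ j ∈ Icc 1 m \ T, g j) * Psgn g h T)
              - h (m+1) * ((∏ j ∈ Icc 1 m \ T, g j) * Psgn g h T *
                  (if m ∈ T then 1 else -1))) := by
    intro T hT
    have hT' := mem_powerset.mp hT
    rw [sup_insert_eq hT', sdiff_split g hmn hT', Qprod g h hT']
    have he : n - (m + 1) - 1 = n - m - 2 := by omega
    rw [he]
    ring
  rw [sum_congr rfl e, ← mul_sum, sum_sub_distrib, ← mul_sum, ← mul_sum, ← AA, ← CC, CC_eq, DD,
    prod_Icc_succ_top (show 1 ≤ m + 1 by omega)]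
  ring

end Aux

/-- The general identity
`3^{n-1} g₁⋯g_n + h₁⋯h_n = Σ_{∅ ≠ S ⊆ [n]} 3^{δ(S)} ∏_{j∉S} g_j ∏_{j∈S} (g_j + σ_j(S)τ_j(S)h_j)`. -/
theorem stmt_14 {R : Type*} [CommRing R] (n : ℕ) (hn : 2 ≤ n) (g h : ℕ → R) :
    (3 : R) ^ (n - 1) * ∏ j ∈ Finset.Icc 1 n, g j + ∏ j ∈ Finset.Icc 1 n, h j =
      ∑ S ∈ (Finset.Icc 1 n).powerset.filter (· ≠ ∅),
        (3 : R) ^ (n - S.sup id - 1) *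
          (∏ j ∈ Finset.Icc 1 n \ S, g j) *
          ∏ j ∈ S, (g j +
            (if j - 1 ∈ S then (1 : R) else -1) *
            (if j < S.sup id then (1 : R) else -1) * h j) := by
  obtain ⟨k, rfl⟩ : ∃ k, n = k + 1 := ⟨n - 1, by omega⟩
  have hg := group (k + 1) (fun S => (3 : R) ^ (k + 1 - S.sup id - 1) *
      (∏ j ∈ Finset.Icc 1 (k + 1) \ S, g j) *
      ∏ j ∈ S, (g j + (if j - 1 ∈ S then (1 : R) else -1) *
        (if j < S.sup id then (1 : R) else -1) * h j))
  rw [hg]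
  have e : ∀ m ∈ range (k + 1),
      (∑ T ∈ (Icc 1 m).powerset, (fun S => (3 : R) ^ (k + 1 - S.sup id - 1) *
          (∏ j ∈ Finset.Icc 1 (k + 1) \ S, g j) *
          ∏ j ∈ S, (g j + (if j - 1 ∈ S then (1 : R) else -1) *
            (if j < S.sup id then (1 : R) else -1) * h j)) (insert (m + 1) T))
        = (3 : R) ^ (k - m - 1) * (∏ j ∈ Icc (m + 2) (k + 1), g j) * DD g h m := by
    intro m hm
    have hmk := mem_range.mp hm
    simp only []
    rw [innerSum14 g h (by omega : m + 1 ≤ k + 1)]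
    have : k + 1 - m - 2 = k - m - 1 := by omega
    rw [this]
  rw [sum_congr rfl e, key]
  have : k + 1 - 1 = k := by omega
  rw [this]
end

section
/- For every integer k ≥ 1, the tetrahedron Δ ⊂ ℝ³ with vertices (0,0,0), (1,0,0), (0,1,k), (1,−1,k) contains exactly 4 integer points, while its translate Δ + (1/2, 0, 0) contains exactly k + 1 integer points. -/
open Set

lemma hull_iff (k : ℕ) (hk : 1 ≤ k) (x y z : ℝ) :
    (x, y, z) ∈ convexHull ℝ {((0 : ℝ), (0 : ℝ), (0 : ℝ)), (1, 0, 0),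
      (0, 1, (k : ℝ)), (1, -1, (k : ℝ))} ↔
    0 ≤ z + k * y ∧ 0 ≤ z - k * y ∧ z - k * y ≤ 2 * k * x ∧
      2 * k * x ≤ 2 * k - z - k * y := by
  have hk0 : (0:ℝ) < k := by exact_mod_cast Nat.lt_of_lt_of_le Nat.zero_lt_one hk
  have hkne : (k:ℝ) ≠ 0 := ne_of_gt hk0
  constructor
  · intro h
    have hP : Convex ℝ {q : ℝ × ℝ × ℝ |
        0 ≤ q.2.2 + k * q.2.1 ∧ 0 ≤ q.2.2 - k * q.2.1 ∧
        q.2.2 - k * q.2.1 ≤ 2 * k * q.1 ∧ 2 * k * q.1 ≤ 2 * k - q.2.2 - k * q.2.1} := by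
      intro p hp q hq a b ha hb hab
      simp only [mem_setOf_eq, Prod.fst_add, Prod.snd_add, Prod.smul_fst, Prod.smul_snd,
        smul_eq_mul] at *
      obtain ⟨h1,h2,h3,h4⟩ := hp; obtain ⟨g1,g2,g3,g4⟩ := hq
      refine ⟨by nlinarith, by nlinarith, by nlinarith, by nlinarith⟩
    have hsub : ({((0 : ℝ), (0 : ℝ), (0 : ℝ)), (1, 0, 0), (0, 1, (k : ℝ)),
        (1, -1, (k : ℝ))} : Set (ℝ × ℝ × ℝ)) ⊆ {q : ℝ × ℝ × ℝ |
        0 ≤ q.2.2 + k * q.2.1 ∧ 0 ≤ q.2.2 - k * q.2.1 ∧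
        q.2.2 - k * q.2.1 ≤ 2 * k * q.1 ∧ 2 * k * q.1 ≤ 2 * k - q.2.2 - k * q.2.1} := by
      intro v hv
      simp only [mem_insert_iff, mem_singleton_iff] at hv
      rcases hv with rfl|rfl|rfl|rfl <;> refine ⟨?_, ?_, ?_, ?_⟩ <;>
        (try norm_num) <;> linarith
    exact convexHull_min hsub hP h
  · rintro ⟨h1, h2, h3, h4⟩
    set d : ℝ := (z / k - y) / 2 with hd
    set c : ℝ := (z / k + y) / 2 with hc
    have h2kd : 2 * k * d = z - k * y := by rw [hd]; field_simp
    have h2kc : 2 * k * c = z + k * y := by rw [hc]; field_simp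
    have hd0 : 0 ≤ d := by nlinarith
    have hc0 : 0 ≤ c := by nlinarith
    have hb0 : 0 ≤ x - d := by nlinarith
    have ha0 : 0 ≤ 1 - x - c := by nlinarith
    have key : (x, y, z) = (1 - x - c) • ((0:ℝ),(0:ℝ),(0:ℝ)) + (x - d) • ((1:ℝ),(0:ℝ),(0:ℝ))
        + c • ((0:ℝ),(1:ℝ),(k:ℝ)) + d • ((1:ℝ),(-1:ℝ),(k:ℝ)) := by
      simp only [Prod.ext_iff, Prod.fst_add, Prod.snd_add, Prod.smul_fst, Prod.smul_snd,
        smul_eq_mul]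
      refine ⟨by ring, by rw [hc, hd]; ring, ?_⟩
      rw [hc, hd]; field_simp; ring
    rw [key]
    have hconv := convex_convexHull ℝ ({((0 : ℝ), (0 : ℝ), (0 : ℝ)), (1, 0, 0),
      (0, 1, (k : ℝ)), (1, -1, (k : ℝ))} : Set (ℝ × ℝ × ℝ))
    have m0 : ((0:ℝ),(0:ℝ),(0:ℝ)) ∈ convexHull ℝ ({((0 : ℝ), (0 : ℝ), (0 : ℝ)), (1, 0, 0),
      (0, 1, (k : ℝ)), (1, -1, (k : ℝ))} : Set (ℝ × ℝ × ℝ)) := subset_convexHull ℝ _ (by simp)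
    have m1 : ((1:ℝ),(0:ℝ),(0:ℝ)) ∈ convexHull ℝ ({((0 : ℝ), (0 : ℝ), (0 : ℝ)), (1, 0, 0),
      (0, 1, (k : ℝ)), (1, -1, (k : ℝ))} : Set (ℝ × ℝ × ℝ)) := subset_convexHull ℝ _ (by simp)
    have m2 : ((0:ℝ),(1:ℝ),(k:ℝ)) ∈ convexHull ℝ ({((0 : ℝ), (0 : ℝ), (0 : ℝ)), (1, 0, 0),
      (0, 1, (k : ℝ)), (1, -1, (k : ℝ))} : Set (ℝ × ℝ × ℝ)) := subset_convexHull ℝ _ (by simp)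
    have m3 : ((1:ℝ),(-1:ℝ),(k:ℝ)) ∈ convexHull ℝ ({((0 : ℝ), (0 : ℝ), (0 : ℝ)), (1, 0, 0),
      (0, 1, (k : ℝ)), (1, -1, (k : ℝ))} : Set (ℝ × ℝ × ℝ)) := subset_convexHull ℝ _ (by simp)
    have hsum := hconv.sum_mem (t := (Finset.univ : Finset (Fin 4)))
      (w := ![1 - x - c, x - d, c, d])
      (z := ![((0:ℝ),(0:ℝ),(0:ℝ)), ((1:ℝ),(0:ℝ),(0:ℝ)), ((0:ℝ),(1:ℝ),(k:ℝ)),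
        ((1:ℝ),(-1:ℝ),(k:ℝ))])
      (by intro i _; fin_cases i <;> simp <;> linarith [ha0, hb0, hc0, hd0])
      (by simp [Fin.sum_univ_four]; ring)
      (by intro i _; fin_cases i <;> simpa using by first | exact m0 | exact m1 | exact m2 | exact m3)
    simpa [Fin.sum_univ_four, add_assoc] using hsum


lemma int_char1 (k x y z : ℤ) (hk : 1 ≤ k)
    (h1 : 0 ≤ z + k * y) (h2 : 0 ≤ z - k * y) (h3 : z - k * y ≤ 2 * k * x)
    (h4 : 2 * k * x ≤ 2 * k - z - k * y) :
    (x = 0 ∧ y = 0 ∧ z = 0) ∨ (x = 1 ∧ y = 0 ∧ z = 0) ∨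
    (x = 0 ∧ y = 1 ∧ z = k) ∨ (x = 1 ∧ y = -1 ∧ z = k) := by
  have hpos : (0:ℤ) < k := hk
  have hfac : ∀ a : ℤ, 0 ≤ k * a → 0 ≤ a := by
    intro a ha
    by_contra hc
    push_neg at hc
    have : k * a < 0 := mul_neg_of_pos_of_neg hpos hc
    omega
  have hzk : z ≤ k := by linarith
  rcases lt_trichotomy y 0 with hy|hy|hy
  · have hy1 : y ≤ -1 := by omega
    have hnn : 0 ≤ k * (-y - 1) := mul_nonneg hpos.le (by omega)
    have hz : z = k := le_antisymm hzk (by linarith)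
    subst hz
    have hy2 : (0:ℤ) ≤ 1 + y := hfac _ (by linarith)
    have hy0 : y = -1 := by omega
    subst hy0
    have hx1 : (0:ℤ) ≤ x - 1 := hfac _ (by linarith)
    have hx2 : (0:ℤ) ≤ 1 - x := hfac _ (by linarith)
    right; right; right; exact ⟨by omega, rfl, rfl⟩
  · subst hy
    simp only [mul_zero, sub_zero, add_zero] at h1 h2 h3 h4
    rcases eq_or_lt_of_le h1 with hz0|hz0
    · have hx0 : 0 ≤ x := hfac _ (by linarith)
      have hx1 : (0:ℤ) ≤ 1 - x := hfac _ (by linarith)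
      have : x = 0 ∨ x = 1 := by omega
      rcases this with rfl|rfl
      · left; exact ⟨rfl, rfl, hz0.symm⟩
      · right; left; exact ⟨rfl, rfl, hz0.symm⟩
    · exfalso
      have hx1 : 1 ≤ x := by
        by_contra hc
        push_neg at hc
        have hx0 : x ≤ 0 := by omega
        have : k * x ≤ 0 := mul_nonpos_of_nonneg_of_nonpos hpos.le hx0
        linarith
      have : 0 ≤ k * (x - 1) := mul_nonneg hpos.le (by omega)
      linarith
  · have hy1 : 1 ≤ y := hy
    have hnn : 0 ≤ k * (y - 1) := mul_nonneg hpos.le (by omega)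
    have hz : z = k := le_antisymm hzk (by linarith)
    subst hz
    have hy2 : (0:ℤ) ≤ 1 - y := hfac _ (by linarith)
    have hy0 : y = 1 := by omega
    subst hy0
    have hx1 : (0:ℤ) ≤ x := hfac _ (by linarith)
    have hx2 : (0:ℤ) ≤ -x := hfac _ (by linarith)
    right; right; left; exact ⟨by omega, rfl, rfl⟩

lemma int_char2 (k x y z : ℤ) (hk : 1 ≤ k)
    (h1 : 0 ≤ z + k * y) (h2 : 0 ≤ z - k * y) (h3 : z - k * y + k ≤ 2 * k * x)
    (h4 : 2 * k * x ≤ 3 * k - z - k * y) :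
    x = 1 ∧ y = 0 ∧ 0 ≤ z ∧ z ≤ k := by
  have hpos : (0:ℤ) < k := hk
  have hfac : ∀ a : ℤ, 0 ≤ k * a → 0 ≤ a := by
    intro a ha
    by_contra hc
    push_neg at hc
    have : k * a < 0 := mul_neg_of_pos_of_neg hpos hc
    omega
  have hzk : z ≤ k := by linarith
  rcases lt_trichotomy y 0 with hy|hy|hy
  · exfalso
    have hy1 : y ≤ -1 := by omega
    have hnn : 0 ≤ k * (-y - 1) := mul_nonneg hpos.le (by omega)
    have hz : z = k := le_antisymm hzk (by linarith)
    subst hz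
    have hy2 : (0:ℤ) ≤ 1 + y := hfac _ (by linarith)
    have hy0 : y = -1 := by omega
    subst hy0
    have hx1 : (0:ℤ) ≤ 2 * x - 3 := hfac _ (by linarith)
    have hx2 : (0:ℤ) ≤ 3 - 2 * x := hfac _ (by linarith)
    omega
  · subst hy
    simp only [mul_zero, sub_zero, add_zero] at h1 h2 h3 h4
    have hx1 : (0:ℤ) ≤ 2 * x - 1 := hfac _ (by linarith)
    have hx2 : (0:ℤ) ≤ 3 - 2 * x := hfac _ (by linarith)
    have hx : x = 1 := by omega
    subst hx
    exact ⟨rfl, rfl, h1, by linarith⟩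
  · exfalso
    have hy1 : 1 ≤ y := hy
    have hnn : 0 ≤ k * (y - 1) := mul_nonneg hpos.le (by omega)
    have hz : z = k := le_antisymm hzk (by linarith)
    subst hz
    have hy2 : (0:ℤ) ≤ 1 - y := hfac _ (by linarith)
    have hy0 : y = 1 := by omega
    subst hy0
    have hx1 : (0:ℤ) ≤ 2 * x - 1 := hfac _ (by linarith)
    have hx2 : (0:ℤ) ≤ 1 - 2 * x := hfac _ (by linarith)
    omega


/-- The tetrahedron with vertices `(0,0,0), (1,0,0), (0,1,k), (1,-1,k)` has
exactly `4` integer points, while its translate by `(1/2,0,0)` has exactly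
`k + 1` integer points. -/
theorem stmt_17 (k : ℕ) (hk : 1 ≤ k) :
    {p : ℤ × ℤ × ℤ | ((p.1 : ℝ), (p.2.1 : ℝ), (p.2.2 : ℝ)) ∈
        convexHull ℝ {((0 : ℝ), (0 : ℝ), (0 : ℝ)), (1, 0, 0),
          (0, 1, (k : ℝ)), (1, -1, (k : ℝ))}}.ncard = 4 ∧
    {p : ℤ × ℤ × ℤ | ((p.1 : ℝ) - 1 / 2, (p.2.1 : ℝ), (p.2.2 : ℝ)) ∈
        convexHull ℝ {((0 : ℝ), (0 : ℝ), (0 : ℝ)), (1, 0, 0),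
          (0, 1, (k : ℝ)), (1, -1, (k : ℝ))}}.ncard = k + 1 := by
  have hkZ : (1:ℤ) ≤ (k:ℤ) := by exact_mod_cast hk
  have hkR : (1:ℝ) ≤ (k:ℝ) := by exact_mod_cast hk
  constructor
  · have e1 : {p : ℤ × ℤ × ℤ | ((p.1 : ℝ), (p.2.1 : ℝ), (p.2.2 : ℝ)) ∈
        convexHull ℝ {((0 : ℝ), (0 : ℝ), (0 : ℝ)), (1, 0, 0),
          (0, 1, (k : ℝ)), (1, -1, (k : ℝ))}} =
        {((0:ℤ),(0:ℤ),(0:ℤ)), (1,0,0), (0,1,(k:ℤ)), (1,-1,(k:ℤ))} := by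
      ext ⟨x, y, z⟩
      simp only [Set.mem_setOf_eq, hull_iff k hk, Set.mem_insert_iff,
        Set.mem_singleton_iff, Prod.mk.injEq]
      constructor
      · rintro ⟨h1, h2, h3, h4⟩
        have H1 : (0:ℤ) ≤ z + k * y := by exact_mod_cast h1
        have H2 : (0:ℤ) ≤ z - k * y := by exact_mod_cast h2
        have H3 : z - k * y ≤ 2 * k * x := by exact_mod_cast h3
        have H4 : 2 * k * x ≤ 2 * k - z - k * y := by exact_mod_cast h4
        rcases int_char1 k x y z hkZ H1 H2 H3 H4 with h|h|h|h <;> tauto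
      · rintro (⟨rfl, rfl, rfl⟩|⟨rfl, rfl, rfl⟩|⟨rfl, rfl, rfl⟩|⟨rfl, rfl, rfl⟩) <;>
          refine ⟨?_, ?_, ?_, ?_⟩ <;> push_cast <;> nlinarith
    rw [e1]
    rw [Set.ncard_insert_of_notMem (by norm_num [Prod.ext_iff]),
      Set.ncard_insert_of_notMem (by norm_num [Prod.ext_iff]),
      Set.ncard_pair (by norm_num [Prod.ext_iff])]
  · have inj : Function.Injective (fun t : ℤ => ((1:ℤ), (0:ℤ), t)) := by
      intro a b h
      simpa using congrArg (fun p : ℤ × ℤ × ℤ => p.2.2) h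
    have e2 : {p : ℤ × ℤ × ℤ | ((p.1 : ℝ) - 1 / 2, (p.2.1 : ℝ), (p.2.2 : ℝ)) ∈
        convexHull ℝ {((0 : ℝ), (0 : ℝ), (0 : ℝ)), (1, 0, 0),
          (0, 1, (k : ℝ)), (1, -1, (k : ℝ))}} =
        (fun t : ℤ => ((1:ℤ), (0:ℤ), t)) '' Set.Icc 0 (k:ℤ) := by
      ext ⟨x, y, z⟩
      simp only [Set.mem_setOf_eq, hull_iff k hk, Set.mem_image, Set.mem_Icc,
        Prod.mk.injEq]
      constructor
      · rintro ⟨h1, h2, h3, h4⟩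
        have H1 : (0:ℤ) ≤ z + k * y := by exact_mod_cast h1
        have H2 : (0:ℤ) ≤ z - k * y := by exact_mod_cast h2
        have H3 : z - k * y + k ≤ 2 * k * x := by
          have : ((z - k * y + k : ℤ) : ℝ) ≤ ((2 * k * x : ℤ) : ℝ) := by
            push_cast
            nlinarith
          exact_mod_cast this
        have H4 : 2 * k * x ≤ 3 * k - z - k * y := by
          have : ((2 * k * x : ℤ) : ℝ) ≤ ((3 * k - z - k * y : ℤ) : ℝ) := by
            push_cast
            nlinarith
          exact_mod_cast this
        obtain ⟨rfl, rfl, hz0, hzk⟩ := int_char2 k x y z hkZ H1 H2 H3 H4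
        exact ⟨z, ⟨hz0, hzk⟩, rfl, rfl, rfl⟩
      · rintro ⟨t, ⟨ht0, htk⟩, rfl, rfl, rfl⟩
        have ht0' : (0:ℝ) ≤ (t:ℝ) := by exact_mod_cast ht0
        have htk' : (t:ℝ) ≤ (k:ℝ) := by exact_mod_cast htk
        refine ⟨?_, ?_, ?_, ?_⟩ <;> push_cast <;> nlinarith
    rw [e2, Set.ncard_image_of_injective _ inj, ← Finset.coe_Icc,
      Set.ncard_coe_finset, Int.card_Icc]
    omega
end
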